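/- arXiv:1011.1685 — 3 statements merged into one kernel-verified Lean document; each statement's English description precedes it below -/
import Mathlib

section
/- (Multivariate two-component regular variation.) Let $Z_1,Z_2\in\mathbb{R}^d$ be $\alpha$-regularly varying random vectors with tail measures $\Lambda_1,\Lambda_2$ and the same slowly varying function $L_b$, bounded away from zero and infinity on compacts, and suppose $\lim_{t\to\infty}t^{\alpha}L_b(t)\,\mathbb{P}[|Z_1|>t,\ |Z_2|>t]=0$. Then the pair $(Z_1,Z_2)\in\mathbb{R}^{2d}$ is $\alpha$-regularly varying with tail measure $\Lambda$ given by $\langle F,\Lambda\rangle=\langle F(\cdot,0),\Lambda_1\rangle+\langle F(0,\cdot),\Lambda_2\rangle$, i.e. for every $F\in C_c((\mathbb{R}^d\times\mathbb{R}^d)\setminus\{0\})$, $\lim_{t\to\infty}t^{\alpha}L_b(t)\,\mathbb{E}[F(t^{-1}Z_1,t^{-1}Z_2)]=\langle F,\Lambda\rangle$. -/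
open MeasureTheory Filter Topology

/-!
Write `Φ(x, y) = F (x, y) - F (x, 0) - F (0, y)`, so that the claim splits into the assumed limits
for the sections `F (·, 0)`, `F (0, ·)` plus the vanishing of `t ^ α L t 𝔼 Φ(Z₁ / t, Z₂ / t)`.
Since `F` vanishes near `0` and is uniformly continuous, `Φ` is uniformly small where one argument
is small, and then it is supported where the other argument lies in a fixed compact set away from
`0`; a bump `φ` equal to `1` on that set is a test function, so
`|Φ(x, y)| ≤ η (φ x + φ y) + C 𝟙{‖x‖, ‖y‖ > δ}`.
Regular variation of `Z₁, Z₂` keeps `t ^ α L t 𝔼 φ(Zᵢ / t)` bounded, and by slow variation of `L`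
tail independence at level `t` transfers to level `δ t`.
-/

section CrossTerm

variable {E : Type*} [NormedAddCommGroup E]

lemma abs_cross_term_le_of_norm_right_le {F : E × E → ℝ} {φ : E → ℝ} {r δ η : ℝ}
    (hFr : ∀ p, ‖p‖ < r → F p = 0) (hδr : δ < r)
    (hUC : ∀ p q, dist p q ≤ δ → |F p - F q| ≤ η) (hη : 0 ≤ η) (hφ : 0 ≤ φ)
    (hφ1 : ∀ x y, F (x, y) ≠ 0 → r ≤ ‖x‖ → φ x = 1) {x y : E} (hy : ‖y‖ ≤ δ) :
    |F (x, y) - F (x, 0) - F (0, y)| ≤ η * φ x := by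
  have hyr : ‖y‖ < r := hy.trans_lt hδr
  have hF0y : F (0, y) = 0 := hFr _ (by simpa [Prod.norm_mk] using hyr)
  by_cases hx : F (x, y) = 0 ∧ F (x, 0) = 0
  · rw [hx.1, hx.2, hF0y]
    simpa using mul_nonneg hη (hφ x)
  have hxr : r ≤ ‖x‖ := by
    by_contra! hxr
    exact hx ⟨hFr _ (by simpa [Prod.norm_mk] using ⟨hxr, hyr⟩),
      hFr _ (by simpa [Prod.norm_mk] using hxr)⟩
  have hφx : φ x = 1 := by
    rcases not_and_or.mp hx with h | h
    exacts [hφ1 x y h hxr, hφ1 x 0 h hxr]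
  rw [hF0y, sub_zero, hφx, mul_one]
  exact hUC _ _ (by simpa [Prod.dist_eq] using hy)

variable [LocallyCompactSpace E]

lemma exists_cross_term_bound {F : E × E → ℝ} (hF : Continuous F) (hFc : HasCompactSupport F)
    (hF0 : (0 : E × E) ∉ tsupport F) :
    ∃ φ : E → ℝ, Continuous φ ∧ HasCompactSupport φ ∧ (0 : E) ∉ tsupport φ ∧ 0 ≤ φ ∧
      ∃ C, ∀ η > 0, ∃ δ > 0, ∀ x y, |F (x, y) - F (x, 0) - F (0, y)| ≤
        η * (φ x + φ y) + {p : E × E | δ < ‖p.1‖ ∧ δ < ‖p.2‖}.indicator (fun _ => C) (x, y) := by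
  obtain ⟨r, hr, hrF⟩ := Metric.mem_nhds_iff.mp ((isClosed_tsupport F).isOpen_compl.mem_nhds hF0)
  have hFr : ∀ p, ‖p‖ < r → F p = 0 := fun p hp =>
    image_eq_zero_of_notMem_tsupport (hrF (by simpa using hp))
  set S := (Prod.fst '' tsupport F ∪ Prod.snd '' tsupport F) \ Metric.ball 0 r
  have hS : IsCompact S :=
    ((hFc.image continuous_fst).union (hFc.image continuous_snd)).diff Metric.isOpen_ball
  have hST : Disjoint S (Metric.closedBall 0 (r / 2)) := by
    refine Set.disjoint_left.mpr fun x hxS hxT => hxS.2 ?_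
    simp only [Metric.mem_closedBall, Metric.mem_ball] at hxT ⊢
    linarith
  obtain ⟨φ, hφS, hφT, hφc, hφ01⟩ :=
    exists_continuous_one_zero_of_isCompact hS Metric.isClosed_closedBall hST
  have hφ1 : ∀ x y, F (x, y) ≠ 0 ∨ F (y, x) ≠ 0 → r ≤ ‖x‖ → φ x = 1 := by
    rintro x y (h | h) hxr
    · exact hφS ⟨Or.inl ⟨_, subset_tsupport F h, rfl⟩, by simpa using hxr⟩
    · exact hφS ⟨Or.inr ⟨_, subset_tsupport F h, rfl⟩, by simpa using hxr⟩
  have hφ0 : (0 : E) ∉ tsupport φ := notMem_tsupport_iff_eventuallyEq.mpr <|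
    Filter.eventuallyEq_of_mem (Metric.closedBall_mem_nhds 0 (by positivity)) hφT
  have hφ : 0 ≤ (φ : E → ℝ) := fun x => (hφ01 x).1
  obtain ⟨C, hC⟩ := hFc.exists_bound_of_continuous hF
  refine ⟨φ, φ.continuous, hφc, hφ0, hφ, 3 * C, fun η hη => ?_⟩
  obtain ⟨δ₀, hδ₀, hUC₀⟩ := Metric.uniformContinuous_iff.mp
    (hFc.uniformContinuous_of_continuous hF) η hη
  set δ := min (δ₀ / 2) (r / 2)
  have hδr : δ < r := min_lt_of_right_lt (half_lt_self hr)
  have hUC : ∀ p q, dist p q ≤ δ → |F p - F q| ≤ η := fun p q hpq =>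
    (hUC₀ (hpq.trans_lt (min_lt_of_left_lt (half_lt_self hδ₀)))).le
  refine ⟨δ, by positivity, fun x y => ?_⟩
  have hηφx := mul_nonneg hη.le (hφ x)
  have hηφy := mul_nonneg hη.le (hφ y)
  by_cases hxy : δ < ‖x‖ ∧ δ < ‖y‖
  · rw [Set.indicator_of_mem (by exact hxy)]
    have h3 : ‖F (x, y) - F (x, 0) - F (0, y)‖ ≤ ‖F (x, y)‖ + ‖F (x, 0)‖ + ‖F (0, y)‖ :=
      norm_sub_le_of_le (norm_sub_le _ _) le_rfl
    rw [← Real.norm_eq_abs]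
    linarith [hC (x, y), hC (x, 0), hC (0, y)]
  rw [Set.indicator_of_notMem (by exact hxy), add_zero, mul_add]
  rcases not_and_or.mp hxy with hx | hy
  · have := abs_cross_term_le_of_norm_right_le (F := fun p => F p.swap) (x := y)
      (fun p hp => hFr _ (by simpa [Prod.norm_def, max_comm] using hp))
      hδr (fun p q hpq => hUC _ _ (by simpa [Prod.dist_eq, max_comm] using hpq))
      hη.le hφ (fun x y h hx => hφ1 x y (Or.inr h) hx) (not_lt.mp hx)
    rw [Prod.swap_prod_mk, Prod.swap_prod_mk, Prod.swap_prod_mk, sub_right_comm] at this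
    linarith
  · have := abs_cross_term_le_of_norm_right_le (x := x) hFr hδr hUC hη.le hφ
      (fun x y h hx => hφ1 x y (Or.inl h) hx) (not_lt.mp hy)
    linarith

end CrossTerm

lemma HasCompactSupport.comp_mk_left {X Y : Type*} [TopologicalSpace X] [T2Space X]
    [TopologicalSpace Y] {f : X × Y → ℝ} (hf : HasCompactSupport f) (y : Y) :
    HasCompactSupport fun x => f (x, y) :=
  .intro (hf.image continuous_fst) fun _ hx =>
    image_eq_zero_of_notMem_tsupport fun h => hx ⟨_, h, rfl⟩

lemma HasCompactSupport.comp_mk_right {X Y : Type*} [TopologicalSpace X]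
    [TopologicalSpace Y] [T2Space Y] {f : X × Y → ℝ} (hf : HasCompactSupport f) (x : X) :
    HasCompactSupport fun y => f (x, y) :=
  .intro (hf.image continuous_snd) fun _ hy =>
    image_eq_zero_of_notMem_tsupport fun h => hy ⟨_, h, rfl⟩

lemma tendsto_zero_of_forall_abs_le {ι : Type*} {l : Filter ι} {r a : ι → ℝ} {K : ℝ}
    (ha : Tendsto a l (𝓝 K))
    (h : ∀ η > 0, ∃ b : ι → ℝ, Tendsto b l (𝓝 0) ∧ ∀ᶠ i in l, |r i| ≤ η * a i + b i) :
    Tendsto r l (𝓝 0) := by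
  refine Metric.tendsto_nhds.mpr fun ε hε => ?_
  have hK : 0 < |K| + 1 := by positivity
  obtain ⟨b, hb, hrb⟩ := h (ε / 2 / (|K| + 1)) (by positivity)
  filter_upwards [hrb, ha.eventually_lt_const (lt_of_le_of_lt (le_abs_self K) (lt_add_one _)),
    hb.eventually_lt_const (half_pos hε)] with i hri hai hbi
  rw [Real.dist_0_eq_abs]
  calc |r i| ≤ ε / 2 / (|K| + 1) * a i + b i := hri
    _ ≤ ε / 2 / (|K| + 1) * (|K| + 1) + b i := by gcongr
    _ < ε := by rw [div_mul_cancel₀ _ hK.ne']; linarith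

lemma tendsto_rpow_mul_mul_comp_const_mul {L h : ℝ → ℝ} {α δ : ℝ} (hδ : 0 < δ)
    (hL : Tendsto (fun t => L (δ⁻¹ * t) / L t) atTop (𝓝 1))
    (hh : Tendsto (fun t => t ^ α * L t * h t) atTop (𝓝 0)) :
    Tendsto (fun t => t ^ α * L t * h (δ * t)) atTop (𝓝 0) := by
  have hprod : Tendsto (fun u => δ⁻¹ ^ α * (L (δ⁻¹ * u) / L u) * (u ^ α * L u * h u))
      atTop (𝓝 0) := by
    simpa using (hL.const_mul (δ⁻¹ ^ α)).mul hh
  have hu : Tendsto (fun u => (δ⁻¹ * u) ^ α * L (δ⁻¹ * u) * h u) atTop (𝓝 0) := by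
    refine hprod.congr' ?_
    filter_upwards [eventually_ge_atTop 0, hL.eventually_ne one_ne_zero] with u hu hLu
    have : L u ≠ 0 := fun h0 => hLu (by rw [h0, div_zero])
    rw [Real.mul_rpow (by positivity) hu]
    field_simp
  refine (hu.comp (tendsto_id.const_mul_atTop hδ)).congr fun t => ?_
  simp [inv_mul_cancel_left₀ hδ.ne']

lemma Continuous.integrable_comp_of_hasCompactSupport {Ω X : Type*} [MeasurableSpace Ω]
    [TopologicalSpace X] [MeasurableSpace X] [OpensMeasurableSpace X] {P : Measure Ω}
    [IsFiniteMeasure P] {f : X → ℝ} (hf : Continuous f) (hfc : HasCompactSupport f)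
    {Z : Ω → X} (hZ : Measurable Z) : Integrable (fun ω => f (Z ω)) P :=
  (hf.integrable_of_hasCompactSupport hfc).comp_measurable hZ

lemma abs_integral_cross_term_le {Ω E : Type*} [MeasurableSpace Ω] [NormedAddCommGroup E]
    [MeasurableSpace E] [BorelSpace E] [SecondCountableTopology E]
    (P : Measure Ω) [IsFiniteMeasure P] {X Y : Ω → E} (hX : Measurable X) (hY : Measurable Y)
    {F : E × E → ℝ} (hF : Continuous F) (hFc : HasCompactSupport F)
    {φ : E → ℝ} (hφ : Continuous φ) (hφc : HasCompactSupport φ)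
    {S : Set (E × E)} (hS : MeasurableSet S) {η C : ℝ}
    (hbound : ∀ x y, |F (x, y) - F (x, 0) - F (0, y)| ≤
      η * (φ x + φ y) + S.indicator (fun _ => C) (x, y)) :
    |(∫ ω, F (X ω, Y ω) ∂P) - (∫ ω, F (X ω, 0) ∂P) - ∫ ω, F (0, Y ω) ∂P| ≤
      η * ((∫ ω, φ (X ω) ∂P) + ∫ ω, φ (Y ω) ∂P) +
        C * P.real ((fun ω => (X ω, Y ω)) ⁻¹' S) := by
  have hXY : Measurable fun ω => (X ω, Y ω) := hX.prodMk hY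
  have iF := hF.integrable_comp_of_hasCompactSupport (P := P) hFc hXY
  have iF₁ : Integrable (fun ω => F (X ω, 0)) P :=
    hF.integrable_comp_of_hasCompactSupport hFc (hX.prodMk measurable_const)
  have iF₂ : Integrable (fun ω => F (0, Y ω)) P :=
    hF.integrable_comp_of_hasCompactSupport hFc (measurable_const.prodMk hY)
  have iφX := hφ.integrable_comp_of_hasCompactSupport (P := P) hφc hX
  have iφY := hφ.integrable_comp_of_hasCompactSupport (P := P) hφc hY
  have iS : Integrable (((fun ω => (X ω, Y ω)) ⁻¹' S).indicator fun _ => C) P :=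
    (integrable_const C).indicator (hXY hS)
  have iF₁₂ : Integrable (fun ω => F (X ω, Y ω) - F (X ω, 0)) P := iF.sub iF₁
  have iφ : Integrable (fun ω => η * (φ (X ω) + φ (Y ω))) P := (iφX.add iφY).const_mul η
  calc |(∫ ω, F (X ω, Y ω) ∂P) - (∫ ω, F (X ω, 0) ∂P) - ∫ ω, F (0, Y ω) ∂P|
      = |∫ ω, F (X ω, Y ω) - F (X ω, 0) - F (0, Y ω) ∂P| := by
        rw [integral_sub iF₁₂ iF₂, integral_sub iF iF₁]
    _ ≤ ∫ ω, |F (X ω, Y ω) - F (X ω, 0) - F (0, Y ω)| ∂P := abs_integral_le_integral_abs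
    _ ≤ ∫ ω, η * (φ (X ω) + φ (Y ω)) +
          ((fun ω => (X ω, Y ω)) ⁻¹' S).indicator (fun _ => C) ω ∂P :=
        integral_mono (iF₁₂.sub iF₂).abs (iφ.add iS) fun ω => hbound (X ω) (Y ω)
    _ = _ := by
        rw [integral_add iφ iS, integral_const_mul, integral_add iφX iφY,
          integral_indicator_const _ (hXY hS), smul_eq_mul, mul_comm C]

/-- `Z` is `α`-regularly varying with slowly varying function `L` and tail measure `Λ`. -/
def HasTailMeasure {Ω E : Type*} [MeasurableSpace Ω] [NormedAddCommGroup E] [NormedSpace ℝ E]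
    [MeasurableSpace E] (P : Measure Ω) (Z : Ω → E) (α : ℝ) (L : ℝ → ℝ) (Λ : Measure E) :
    Prop :=
  ∀ f : E → ℝ, Continuous f → HasCompactSupport f → (0 : E) ∉ tsupport f →
    Tendsto (fun t : ℝ => t ^ α * L t * ∫ ω, f (t⁻¹ • Z ω) ∂P) atTop (𝓝 (∫ x, f x ∂Λ))

theorem HasTailMeasure.tendsto_cross_term {Ω E : Type*} [MeasurableSpace Ω]
    [NormedAddCommGroup E] [NormedSpace ℝ E] [FiniteDimensional ℝ E] [MeasurableSpace E]
    [BorelSpace E] {P : Measure Ω} [IsFiniteMeasure P] {Z1 Z2 : Ω → E} {α : ℝ} {L : ℝ → ℝ}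
    {Λ1 Λ2 : Measure E} (h1 : HasTailMeasure P Z1 α L Λ1) (h2 : HasTailMeasure P Z2 α L Λ2)
    (hZ1 : Measurable Z1) (hZ2 : Measurable Z2)
    (hL : ∀ l : ℝ, 0 < l → Tendsto (fun t => L (l * t) / L t) atTop (𝓝 1))
    (htail : Tendsto (fun t : ℝ => t ^ α * L t * (P {ω | t < ‖Z1 ω‖ ∧ t < ‖Z2 ω‖}).toReal)
      atTop (𝓝 0))
    {F : E × E → ℝ} (hF : Continuous F) (hFc : HasCompactSupport F)
    (hF0 : (0 : E × E) ∉ tsupport F) :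
    Tendsto (fun t : ℝ => t ^ α * L t * ((∫ ω, F (t⁻¹ • Z1 ω, t⁻¹ • Z2 ω) ∂P) -
      (∫ ω, F (t⁻¹ • Z1 ω, 0) ∂P) - ∫ ω, F (0, t⁻¹ • Z2 ω) ∂P)) atTop (𝓝 0) := by
  obtain ⟨φ, hφ, hφc, hφ0, hφnn, C, hbound⟩ := exists_cross_term_bound hF hFc hF0
  refine tendsto_zero_of_forall_abs_le
    ((h1 φ hφ hφc hφ0).abs.add (h2 φ hφ hφc hφ0).abs) fun η hη => ?_
  obtain ⟨δ, hδ, hδF⟩ := hbound η hη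
  refine ⟨fun t => C * |t ^ α * L t * P.real {ω | δ * t < ‖Z1 ω‖ ∧ δ * t < ‖Z2 ω‖}|, ?_, ?_⟩
  · simpa using ((tendsto_rpow_mul_mul_comp_const_mul
      (h := fun u => P.real {ω | u < ‖Z1 ω‖ ∧ u < ‖Z2 ω‖}) hδ (hL _ (inv_pos.2 hδ))
      htail).abs.const_mul C)
  filter_upwards [eventually_gt_atTop 0] with t ht
  have hS : (fun ω => (t⁻¹ • Z1 ω, t⁻¹ • Z2 ω)) ⁻¹' {p : E × E | δ < ‖p.1‖ ∧ δ < ‖p.2‖} =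
      {ω | δ * t < ‖Z1 ω‖ ∧ δ * t < ‖Z2 ω‖} := by
    ext ω
    simp [norm_smul, abs_of_pos ht, lt_inv_mul_iff₀ ht, mul_comm]
  have hI := abs_integral_cross_term_le P (X := fun ω => t⁻¹ • Z1 ω)
    (Y := fun ω => t⁻¹ • Z2 ω) (hZ1.const_smul t⁻¹) (hZ2.const_smul t⁻¹) hF hFc hφ hφc
    (S := {p : E × E | δ < ‖p.1‖ ∧ δ < ‖p.2‖})
    ((measurableSet_lt measurable_const measurable_fst.norm).inter
      (measurableSet_lt measurable_const measurable_snd.norm)) hδF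
  rw [hS] at hI
  set g := t ^ α * L t
  rw [abs_mul g, abs_mul g, abs_mul g, abs_mul g,
    abs_of_nonneg (integral_nonneg fun ω => hφnn (t⁻¹ • Z1 ω)),
    abs_of_nonneg (integral_nonneg fun ω => hφnn (t⁻¹ • Z2 ω)), abs_of_nonneg measureReal_nonneg]
  calc |g| * |_| ≤ |g| * (η * ((∫ ω, φ (t⁻¹ • Z1 ω) ∂P) + ∫ ω, φ (t⁻¹ • Z2 ω) ∂P) +
        C * P.real {ω | δ * t < ‖Z1 ω‖ ∧ δ * t < ‖Z2 ω‖}) :=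
        mul_le_mul_of_nonneg_left hI (abs_nonneg g)
    _ = _ := by ring

theorem pair_regular_variation_general
    {Ω : Type*} [MeasurableSpace Ω] {d : ℕ}
    (P : Measure Ω) [IsProbabilityMeasure P]
    (Z1 Z2 : Ω → EuclideanSpace ℝ (Fin d))
    (hZ1 : Measurable Z1) (hZ2 : Measurable Z2)
    (α : ℝ)
    (L : ℝ → ℝ)
    (hLslow : ∀ l : ℝ, 0 < l →
      Tendsto (fun t => L (l * t) / L t) atTop (𝓝 1))
    (Λ1 Λ2 : Measure (EuclideanSpace ℝ (Fin d)))
    (hconv1 : ∀ f : EuclideanSpace ℝ (Fin d) → ℝ, Continuous f →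
      HasCompactSupport f → (0 : EuclideanSpace ℝ (Fin d)) ∉ tsupport f →
      Tendsto (fun t : ℝ => t ^ α * L t * ∫ ω, f (t⁻¹ • Z1 ω) ∂P) atTop
        (𝓝 (∫ x, f x ∂Λ1)))
    (hconv2 : ∀ f : EuclideanSpace ℝ (Fin d) → ℝ, Continuous f →
      HasCompactSupport f → (0 : EuclideanSpace ℝ (Fin d)) ∉ tsupport f →
      Tendsto (fun t : ℝ => t ^ α * L t * ∫ ω, f (t⁻¹ • Z2 ω) ∂P) atTop
        (𝓝 (∫ x, f x ∂Λ2)))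
    (htailindep : Tendsto
      (fun t : ℝ => t ^ α * L t * (P {ω | t < ‖Z1 ω‖ ∧ t < ‖Z2 ω‖}).toReal)
      atTop (𝓝 0)) :
    ∀ F : EuclideanSpace ℝ (Fin d) × EuclideanSpace ℝ (Fin d) → ℝ,
      Continuous F → HasCompactSupport F →
      (0 : EuclideanSpace ℝ (Fin d) × EuclideanSpace ℝ (Fin d)) ∉ tsupport F →
      Tendsto (fun t : ℝ => t ^ α * L t * ∫ ω, F (t⁻¹ • Z1 ω, t⁻¹ • Z2 ω) ∂P)
        atTop (𝓝 ((∫ x, F (x, 0) ∂Λ1) + ∫ x, F (0, x) ∂Λ2)) := by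
  intro F hF hFc hF0
  have h₁ := hconv1 (fun x => F (x, 0)) (by fun_prop) (hFc.comp_mk_left 0)
    fun h => hF0 (tsupport_comp_subset_preimage F (f := fun x => (x, 0)) (by fun_prop) h)
  have h₂ := hconv2 (fun y => F (0, y)) (by fun_prop) (hFc.comp_mk_right 0)
    fun h => hF0 (tsupport_comp_subset_preimage F (f := fun y => (0, y)) (by fun_prop) h)
  have hcross := HasTailMeasure.tendsto_cross_term hconv1 hconv2 hZ1 hZ2 hLslow htailindep
    hF hFc hF0
  rw [← add_zero (_ + _)]
  exact ((h₁.add h₂).add hcross).congr fun t => by ring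

/-- two-component regular variation: if `Z₁, Z₂` are
`α`-regularly varying with tail measures `Λ₁, Λ₂` (same slowly varying `L_b`,
bounded away from `0,∞` on compacts) and asymptotically tail independent, then
the pair `(Z₁,Z₂)` is `α`-regularly varying with tail measure
`⟨F,Λ⟩ = ⟨F(·,0),Λ₁⟩ + ⟨F(0,·),Λ₂⟩`. -/
theorem pair_regular_variation
    {Ω : Type*} [MeasurableSpace Ω] {d : ℕ}
    (P : Measure Ω) [IsProbabilityMeasure P]
    (Z1 Z2 : Ω → EuclideanSpace ℝ (Fin d))
    (hZ1 : Measurable Z1) (hZ2 : Measurable Z2)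
    (α : ℝ) (hα : 0 < α)
    (L : ℝ → ℝ)
    (hLslow : ∀ l : ℝ, 0 < l →
      Tendsto (fun t => L (l * t) / L t) atTop (𝓝 1))
    (hLbdd : ∀ a b : ℝ, 0 < a →
      ∃ m M : ℝ, 0 < m ∧ ∀ t ∈ Set.Icc a b, m ≤ L t ∧ L t ≤ M)
    (Λ1 Λ2 : Measure (EuclideanSpace ℝ (Fin d)))
    (hconv1 : ∀ f : EuclideanSpace ℝ (Fin d) → ℝ, Continuous f →
      HasCompactSupport f → (0 : EuclideanSpace ℝ (Fin d)) ∉ tsupport f →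
      Tendsto (fun t : ℝ => t ^ α * L t * ∫ ω, f (t⁻¹ • Z1 ω) ∂P) atTop
        (𝓝 (∫ x, f x ∂Λ1)))
    (hconv2 : ∀ f : EuclideanSpace ℝ (Fin d) → ℝ, Continuous f →
      HasCompactSupport f → (0 : EuclideanSpace ℝ (Fin d)) ∉ tsupport f →
      Tendsto (fun t : ℝ => t ^ α * L t * ∫ ω, f (t⁻¹ • Z2 ω) ∂P) atTop
        (𝓝 (∫ x, f x ∂Λ2)))
    (htailindep : Tendsto
      (fun t : ℝ => t ^ α * L t * (P {ω | t < ‖Z1 ω‖ ∧ t < ‖Z2 ω‖}).toReal)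
      atTop (𝓝 0)) :
    ∀ F : EuclideanSpace ℝ (Fin d) × EuclideanSpace ℝ (Fin d) → ℝ,
      Continuous F → HasCompactSupport F →
      (0 : EuclideanSpace ℝ (Fin d) × EuclideanSpace ℝ (Fin d)) ∉ tsupport F →
      Tendsto (fun t : ℝ => t ^ α * L t * ∫ ω, F (t⁻¹ • Z1 ω, t⁻¹ • Z2 ω) ∂P)
        atTop (𝓝 ((∫ x, F (x, 0) ∂Λ1) + ∫ x, F (0, x) ∂Λ2)) :=
  pair_regular_variation_general P Z1 Z2 hZ1 hZ2 α L hLslow Λ1 Λ2 hconv1 hconv2 htailindep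
end

section
/- (Dominating bound in Breiman's lemma.) Let $X$ be an $\alpha$-regularly varying random vector with slowly varying function $L_b$, bounded away from zero and infinity on compacts, so that $\sup_{t>0}t^{\alpha}L_b(t)\mathbb{P}[|X|>t]<\infty$. Let $A$ be a random matrix with $\mathbb{E}\|A\|^{\beta}<\infty$, $\beta>\alpha$, independent of $X$. Then for any bounded measurable $f$ supported in $\{|x|>\eta\}$, $\eta>0$, there is a measurable function $g$ of $A$ with $\mathbb{E}[g(A)]<\infty$ such that almost surely $\sup_{t>0}\,t^{\alpha}L_b(t)\,\mathbb{E}[f(t^{-1}AX)\,|\,A]\le g(A)$. -/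
open MeasureTheory ProbabilityTheory Filter Topology

noncomputable section

/-!
Conditioning on `A` freezes it: by independence, `𝔼[f(t⁻¹AX) | A] = ∫ f(t⁻¹ a x) dℙ_X(x)` at
`a = A`, which is at most `‖f‖_∞ ℙ(‖X‖ > t/c)` with `c = ‖a‖/η`. So everything reduces to the
Potter-type estimate `t^α L(t) ℙ(‖X‖ > t/c) ≤ K (1 + c^β)`, uniformly in `t > 0`. Let `2^n` be the
dyadic scale of `c` and `s = t/2^n`. Slow variation gives `L(2^n s) ≤ κ^n L(s)` for large `s`,
with `κ = 2^(β-α)`, so there the estimate follows from `sup_t t^α L(t) ℙ(‖X‖ > t) < ∞`; for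
bounded `s` one uses instead that `L` is bounded on compacts and that `t^α L(t)` is bounded for
`t ≤ s₀` as soon as `ℙ(‖X‖ > s₀) > 0`. As `𝔼‖A‖^β < ∞`, `g(a) = K'(1 + (‖a‖/η)^β)` is integrable.
-/

open Set

theorem exists_two_pow_between (c : ℝ) : ∃ n : ℕ, c ≤ 2 ^ n ∧ (2 : ℝ) ^ n ≤ 2 * max c 1 := by
  rcases le_or_gt c 1 with hc | hc
  · exact ⟨0, by simpa using hc, by norm_num; linarith [le_max_right c 1]⟩
  obtain ⟨n, hn, hcn⟩ := exists_nat_pow_near hc.le one_lt_two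
  refine ⟨n + 1, hcn.le, ?_⟩
  rw [pow_succ, max_eq_left hc.le]
  linarith

theorem max_one_rpow_le {c β : ℝ} (hc : 0 ≤ c) : max c 1 ^ β ≤ 1 + c ^ β := by
  rcases le_total c 1 with h | h
  · rw [max_eq_right h, Real.one_rpow]
    linarith [Real.rpow_nonneg hc β]
  · rw [max_eq_left h]
    linarith

section SlowVariation

variable {L : ℝ → ℝ} {κ T : ℝ}

theorem pos_of_forall_Icc_bounds
    (hLbdd : ∀ a b : ℝ, 0 < a → ∃ m M : ℝ, 0 < m ∧ ∀ t ∈ Icc a b, m ≤ L t ∧ L t ≤ M)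
    {t : ℝ} (ht : 0 < t) : 0 < L t :=
  let ⟨_, _, hm, h⟩ := hLbdd t t ht
  hm.trans_le (h t ⟨le_rfl, le_rfl⟩).1

theorem exists_forall_ge_doubling_le (hL : Tendsto (fun t => L (2 * t) / L t) atTop (𝓝 1))
    (hpos : ∀ t > 0, 0 < L t) (hκ : 1 < κ) : ∃ T > 0, ∀ x ≥ T, L (2 * x) ≤ κ * L x := by
  obtain ⟨T, hT⟩ := eventually_atTop.mp (hL.eventually_lt_const hκ)
  refine ⟨max T 1, by positivity, fun x hx => ?_⟩
  have hx0 : 0 < x := one_pos.trans_le ((le_max_right _ _).trans hx)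
  exact ((div_lt_iff₀ (hpos x hx0)).mp (hT x ((le_max_left _ _).trans hx))).le

theorem le_pow_mul_of_doubling (hdbl : ∀ x ≥ T, L (2 * x) ≤ κ * L x) (hT : 0 ≤ T)
    (hκ : 0 ≤ κ) : ∀ (n : ℕ) {x : ℝ}, T ≤ x → L (2 ^ n * x) ≤ κ ^ n * L x
  | 0, x, _ => by simp
  | n + 1, x, hx => by
    calc L (2 ^ (n + 1) * x) = L (2 ^ n * (2 * x)) := by ring_nf
      _ ≤ κ ^ n * L (2 * x) := le_pow_mul_of_doubling hdbl hT hκ n (by linarith)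
      _ ≤ κ ^ n * (κ * L x) := by gcongr; exact hdbl x hx
      _ = κ ^ (n + 1) * L x := by ring

theorem le_mul_pow_of_doubling_of_mem_Icc {a B : ℝ} (hdbl : ∀ x ≥ T, L (2 * x) ≤ κ * L x)
    (hκ : 1 ≤ κ) (haT : a ≤ T) (hB0 : 0 ≤ B) (hB : ∀ u ∈ Icc a (2 * T), L u ≤ B) :
    ∀ (n : ℕ) {u : ℝ}, u ∈ Icc a (2 ^ n * (2 * T)) → L u ≤ B * κ ^ n
  | 0, u, hu => by simpa using hB u (by simpa using hu)
  | n + 1, u, ⟨hau, hu⟩ => by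
    rcases le_or_gt u (2 * T) with hsmall | hlarge
    · calc L u ≤ B := hB u ⟨hau, hsmall⟩
        _ ≤ B * κ ^ (n + 1) := le_mul_of_one_le_right hB0 (one_le_pow₀ hκ)
    · have hhalf : u / 2 ∈ Icc a (2 ^ n * (2 * T)) :=
        ⟨by linarith, by rw [pow_succ] at hu; linarith⟩
      calc L u = L (2 * (u / 2)) := by ring_nf
        _ ≤ κ * L (u / 2) := hdbl _ (by linarith)
        _ ≤ κ * (B * κ ^ n) := by
          gcongr
          exact le_mul_pow_of_doubling_of_mem_Icc hdbl hκ haT hB0 hB n hhalf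
        _ = B * κ ^ (n + 1) := by ring

variable {α M : ℝ} {p : ℝ → ℝ}

theorem rpow_mul_le_of_mem_Icc {a B : ℝ} (hα : 0 ≤ α) (hdbl : ∀ x ≥ T, L (2 * x) ≤ κ * L x)
    (hκ : 1 ≤ κ) (ha : 0 < a) (haT : a ≤ T) (hB0 : 0 ≤ B) (hB : ∀ u ∈ Icc a (2 * T), L u ≤ B)
    (n : ℕ) {t : ℝ} (ht : t ∈ Icc a (2 ^ n * T)) :
    t ^ α * L t ≤ T ^ α * B * (((2 : ℝ) ^ n) ^ α * κ ^ n) := by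
  have hLt : L t ≤ B * κ ^ n :=
    le_mul_pow_of_doubling_of_mem_Icc hdbl hκ haT hB0 hB n ⟨ht.1, ht.2.trans (by gcongr; linarith)⟩
  have htα : t ^ α ≤ T ^ α * ((2 : ℝ) ^ n) ^ α := by
    rw [← Real.mul_rpow (by linarith) (by positivity), mul_comm]
    exact Real.rpow_le_rpow (by linarith [ht.1]) ht.2 hα
  calc t ^ α * L t ≤ t ^ α * (B * κ ^ n) := by
        gcongr
        exact Real.rpow_nonneg (by linarith [ht.1]) α
    _ ≤ T ^ α * ((2 : ℝ) ^ n) ^ α * (B * κ ^ n) := by gcongr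
    _ = T ^ α * B * (((2 : ℝ) ^ n) ^ α * κ ^ n) := by ring

theorem rpow_mul_le_div_of_le (hpos : ∀ t > 0, 0 < L t) (hp : Antitone p)
    (hM : ∀ t > 0, t ^ α * L t * p t ≤ M) {s t : ℝ} (ht : 0 < t) (hts : t ≤ s) (hps : 0 < p s) :
    t ^ α * L t ≤ M / p s := by
  have := hpos t ht
  rw [le_div_iff₀ hps]
  calc t ^ α * L t * p s ≤ t ^ α * L t * p t := by gcongr; exact hp hts
    _ ≤ M := hM t ht

theorem exists_dyadic_tail_bound (hα : 0 ≤ α) (hκ : 1 < κ)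
    (hL2 : Tendsto (fun t => L (2 * t) / L t) atTop (𝓝 1))
    (hLbdd : ∀ a b : ℝ, 0 < a → ∃ m M : ℝ, 0 < m ∧ ∀ t ∈ Icc a b, m ≤ L t ∧ L t ≤ M)
    (hp0 : ∀ s, 0 ≤ p s) (hp1 : ∀ s, p s ≤ 1) (hp : Antitone p)
    (hM : ∀ t > 0, t ^ α * L t * p t ≤ M) :
    ∃ C ≥ 0, ∀ (n : ℕ) (t : ℝ), 0 < t →
      t ^ α * L t * p (t / 2 ^ n) ≤ C * (((2 : ℝ) ^ n) ^ α * κ ^ n) := by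
  have hpos : ∀ t > 0, 0 < L t := fun _ => pos_of_forall_Icc_bounds hLbdd
  by_cases hdeg : ∀ s > 0, p s = 0
  · exact ⟨0, le_rfl, fun n t ht => by rw [hdeg _ (by positivity)]; simp⟩
  push Not at hdeg
  obtain ⟨s₀, hs₀, hps₀⟩ := hdeg
  replace hps₀ : 0 < p s₀ := (hp0 s₀).lt_of_ne' hps₀
  obtain ⟨T, hT, hdbl⟩ := exists_forall_ge_doubling_le hL2 hpos hκ
  set T₀ := max T s₀
  have hdbl₀ : ∀ x ≥ T₀, L (2 * x) ≤ κ * L x := fun x hx => hdbl x ((le_max_left _ _).trans hx)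
  have hs₀T₀ : s₀ ≤ T₀ := le_max_right _ _
  obtain ⟨m, B, hm, hB⟩ := hLbdd s₀ (2 * T₀) hs₀
  have hB0 : 0 ≤ B := by
    obtain ⟨h1, h2⟩ := hB s₀ ⟨le_rfl, by linarith⟩
    linarith
  have hM0 : 0 ≤ M := by
    have := hpos s₀ hs₀
    exact (by positivity : 0 ≤ s₀ ^ α * L s₀ * p s₀).trans (hM s₀ hs₀)
  set C := max (max M (M / p s₀)) (T₀ ^ α * B)
  refine ⟨C, by positivity, fun n t ht => ?_⟩
  set s := t / 2 ^ n
  have hts : t = 2 ^ n * s := (mul_div_cancel₀ t (by positivity)).symm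
  have hLt := hpos t ht
  -- Three regimes: `s ≥ T₀` (double from `s`), `t ≤ s₀`, and `s₀ < t ≤ 2 ^ n T₀`.
  rcases le_or_gt T₀ s with hs | hs
  · calc t ^ α * L t * p s ≤ ((2 : ℝ) ^ n) ^ α * s ^ α * (κ ^ n * L s) * p s := by
          rw [hts, Real.mul_rpow (by positivity) (by positivity)]
          gcongr
          · exact hp0 s
          · exact le_pow_mul_of_doubling hdbl₀ (by positivity) (by linarith) n hs
      _ = (((2 : ℝ) ^ n) ^ α * κ ^ n) * (s ^ α * L s * p s) := by ring
      _ ≤ (((2 : ℝ) ^ n) ^ α * κ ^ n) * C := by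
          gcongr
          exact (hM s (by positivity)).trans ((le_max_left _ _).trans (le_max_left _ _))
      _ = C * (((2 : ℝ) ^ n) ^ α * κ ^ n) := mul_comm _ _
  rcases le_or_gt t s₀ with hts₀ | hts₀
  · have hscale : 1 ≤ ((2 : ℝ) ^ n) ^ α * κ ^ n :=
      one_le_mul_of_one_le_of_one_le (Real.one_le_rpow (one_le_pow₀ one_le_two) hα)
        (one_le_pow₀ hκ.le)
    calc t ^ α * L t * p s ≤ M / p s₀ * 1 :=
          mul_le_mul (rpow_mul_le_div_of_le hpos hp hM ht hts₀ hps₀) (hp1 s) (hp0 s)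
            (by positivity)
      _ ≤ C * (((2 : ℝ) ^ n) ^ α * κ ^ n) :=
          mul_le_mul ((le_max_right _ _).trans (le_max_left _ _)) hscale zero_le_one
            (by positivity)
  · have htT₀ : t ≤ 2 ^ n * T₀ := by rw [hts]; gcongr
    calc t ^ α * L t * p s ≤ t ^ α * L t := mul_le_of_le_one_right (by positivity) (hp1 s)
      _ ≤ T₀ ^ α * B * (((2 : ℝ) ^ n) ^ α * κ ^ n) :=
          rpow_mul_le_of_mem_Icc hα hdbl₀ hκ.le hs₀ hs₀T₀ hB0 (fun u hu => (hB u hu).2) n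
            ⟨hts₀.le, htT₀⟩
      _ ≤ C * (((2 : ℝ) ^ n) ^ α * κ ^ n) := by gcongr; exact le_max_right _ _

theorem exists_tail_scaling_bound {E : Type*} [Norm E] [MeasurableSpace E] (μ : Measure E)
    [IsProbabilityMeasure μ] {β : ℝ} (hα : 0 ≤ α) (hαβ : α < β)
    (hL2 : Tendsto (fun t => L (2 * t) / L t) atTop (𝓝 1))
    (hLbdd : ∀ a b : ℝ, 0 < a → ∃ m M : ℝ, 0 < m ∧ ∀ t ∈ Icc a b, m ≤ L t ∧ L t ≤ M)
    (hM : ∀ t > 0, t ^ α * L t * μ.real {x | t < ‖x‖} ≤ M) :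
    ∃ K ≥ 0, ∀ t > 0, ∀ c ≥ 0, t ^ α * L t * μ.real {x | t < c * ‖x‖} ≤ K * (1 + c ^ β) := by
  have hβ : 0 ≤ β := by linarith
  obtain ⟨C, hC0, hC⟩ := exists_dyadic_tail_bound (κ := 2 ^ (β - α))
    (p := fun s => μ.real {x | s < ‖x‖}) hα (Real.one_lt_rpow one_lt_two (by linarith)) hL2
    hLbdd (fun _ => measureReal_nonneg) (fun _ => measureReal_le_one)
    (fun _ _ hsu => measureReal_mono fun _ hx => hsu.trans_lt hx) hM
  refine ⟨C * 2 ^ β, by positivity, fun t ht c hc => ?_⟩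
  have htL : 0 ≤ t ^ α * L t := by
    have := pos_of_forall_Icc_bounds hLbdd ht
    positivity
  rcases hc.eq_or_lt with rfl | hc
  · have hempty : {x : E | t < 0 * ‖x‖} = ∅ :=
      eq_empty_of_forall_notMem fun x (hx : t < 0 * ‖x‖) => by rw [zero_mul] at hx; linarith
    rw [hempty, measureReal_empty, mul_zero]
    positivity
  obtain ⟨n, hcn, hn⟩ := exists_two_pow_between c
  have hset : {x : E | t < c * ‖x‖} = {x | t / c < ‖x‖} := by
    ext x; simp only [mem_ofPred_eq, div_lt_iff₀' hc]
  have hmono : μ.real {x | t / c < ‖x‖} ≤ μ.real {x | t / 2 ^ n < ‖x‖} :=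
    measureReal_mono fun x hx => (div_le_div_of_nonneg_left ht.le hc hcn).trans_lt hx
  have hpow : ((2 : ℝ) ^ n) ^ α * (2 ^ (β - α)) ^ n = ((2 : ℝ) ^ n) ^ β := by
    rw [← Real.rpow_mul_natCast zero_le_two, mul_comm (β - α), Real.rpow_natCast_mul zero_le_two,
      ← Real.rpow_add (by positivity), add_sub_cancel]
  calc t ^ α * L t * μ.real {x | t < c * ‖x‖} ≤ t ^ α * L t * μ.real {x | t / 2 ^ n < ‖x‖} := by
        rw [hset]; exact mul_le_mul_of_nonneg_left hmono htL
    _ ≤ C * ((2 : ℝ) ^ n) ^ β := hpow ▸ hC n t ht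
    _ ≤ C * (2 * max c 1) ^ β := by gcongr
    _ = C * 2 ^ β * max c 1 ^ β := by rw [Real.mul_rpow (by norm_num) (by positivity)]; ring
    _ ≤ C * 2 ^ β * (1 + c ^ β) := by gcongr; exact max_one_rpow_le hc.le

end SlowVariation

section Conditioning

theorem condExp_ae_eq_integral_map_of_indepFun {Ω 𝒜 E G : Type*} [MeasurableSpace Ω]
    [MeasurableSpace 𝒜] [MeasurableSpace E] [StandardBorelSpace E] [Nonempty E]
    [NormedAddCommGroup G] [NormedSpace ℝ G] [CompleteSpace G] {P : Measure Ω}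
    [IsFiniteMeasure P] {A : Ω → 𝒜} {X : Ω → E} (hA : Measurable A) (hX : Measurable X)
    (hAX : IndepFun A X P) {F : 𝒜 × E → G} (hF : StronglyMeasurable F)
    (hint : Integrable (fun ω => F (A ω, X ω)) P) :
    P[fun ω => F (A ω, X ω) | MeasurableSpace.comap A inferInstance] =ᵐ[P]
      fun ω => ∫ x, F (A ω, x) ∂P.map X := by
  have hcond : condDistrib X A P =ᵐ[P.map A] Kernel.const 𝒜 (P.map X) := by
    refine condDistrib_ae_eq_of_measure_eq_compProd A hX.aemeasurable ?_
    rw [Measure.compProd_const]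
    exact (indepFun_iff_map_prod_eq_prod_map_map hA.aemeasurable hX.aemeasurable).mp hAX
  filter_upwards [condExp_prod_ae_eq_integral_condDistrib hA hX.aemeasurable hF hint,
    ae_of_ae_map hA.aemeasurable hcond] with ω h1 h2
  rw [h1, h2, Kernel.const_apply]

theorem integral_comp_smul_apply_le {E F : Type*} [NormedAddCommGroup E] [NormedSpace ℝ E]
    [MeasurableSpace E] [OpensMeasurableSpace E] [NormedAddCommGroup F] [NormedSpace ℝ F]
    (μ : Measure E) [IsFiniteMeasure μ] {f : F → ℝ} {Mf η t : ℝ} (hf : ∀ y, |f y| ≤ Mf)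
    (hsupp : ∀ y, ‖y‖ ≤ η → f y = 0) (hη : 0 < η) (ht : 0 < t) (a : E →L[ℝ] F) :
    ∫ x, f (t⁻¹ • a x) ∂μ ≤ Mf * μ.real {x | t < ‖a‖ / η * ‖x‖} := by
  set S := {x : E | t < ‖a‖ / η * ‖x‖}
  have hS : MeasurableSet S := measurableSet_lt measurable_const (measurable_norm.const_mul _)
  have hdom : ∀ x, ‖f (t⁻¹ • a x)‖ ≤ S.indicator (fun _ => Mf) x := by
    intro x
    by_cases hx : x ∈ S
    · simpa [indicator_of_mem hx] using hf _
    rw [indicator_of_notMem hx, hsupp, norm_zero]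
    have hx' : ‖a‖ * ‖x‖ ≤ t * η := by
      have := not_lt.mp (show ¬t < ‖a‖ / η * ‖x‖ from hx)
      rwa [div_mul_eq_mul_div, div_le_iff₀ hη] at this
    rw [norm_smul, norm_inv, Real.norm_of_nonneg ht.le, inv_mul_le_iff₀ ht]
    exact (a.le_opNorm x).trans hx'
  calc ∫ x, f (t⁻¹ • a x) ∂μ ≤ ‖∫ x, f (t⁻¹ • a x) ∂μ‖ := Real.le_norm_self _
    _ ≤ ∫ x, S.indicator (fun _ => Mf) x ∂μ :=
        norm_integral_le_of_norm_le ((integrable_const Mf).indicator hS) (ae_of_all _ hdom)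
    _ = Mf * μ.real S := by rw [integral_indicator_const _ hS, smul_eq_mul, mul_comm]

end Conditioning

/-- dominating bound in Breiman's lemma: with
`sup_{t>0} t^α L(t) ℙ[|X|>t] < ∞`, `𝔼‖A‖^β < ∞` for `β > α`, `A` independent
of `X`, and `f` bounded measurable supported in `{|x| > η}`, there is a
measurable `g` with `𝔼[g(A)] < ∞` dominating
`t^α L(t) 𝔼[f(t⁻¹ A X) | A]` uniformly in `t > 0`. -/
theorem breiman_dominating_bound
    {Ω : Type*} [MeasurableSpace Ω] {d : ℕ}
    [MeasurableSpace (EuclideanSpace ℝ (Fin d) →L[ℝ] EuclideanSpace ℝ (Fin d))]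
    [BorelSpace (EuclideanSpace ℝ (Fin d) →L[ℝ] EuclideanSpace ℝ (Fin d))]
    (P : Measure Ω) [IsProbabilityMeasure P]
    (X : Ω → EuclideanSpace ℝ (Fin d)) (hX : Measurable X)
    (A : Ω → EuclideanSpace ℝ (Fin d) →L[ℝ] EuclideanSpace ℝ (Fin d))
    (hA : Measurable A)
    (hAX : IndepFun A X P)
    (α β : ℝ) (hα : 0 < α) (hβ : α < β)
    (hAmom : Integrable (fun ω => ‖A ω‖ ^ β) P)
    (L : ℝ → ℝ)
    (hLslow : ∀ l : ℝ, 0 < l →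
      Tendsto (fun t => L (l * t) / L t) atTop (𝓝 1))
    (hLbdd : ∀ a b : ℝ, 0 < a →
      ∃ m M : ℝ, 0 < m ∧ ∀ t ∈ Set.Icc a b, m ≤ L t ∧ L t ≤ M)
    (hsup : ∃ M : ℝ, ∀ t : ℝ, 0 < t →
      t ^ α * L t * (P {ω | t < ‖X ω‖}).toReal ≤ M)
    (f : EuclideanSpace ℝ (Fin d) → ℝ) (hfmeas : Measurable f)
    (hfbdd : ∃ M : ℝ, ∀ x, |f x| ≤ M)
    (η : ℝ) (hη : 0 < η)
    (hfsupp : ∀ x : EuclideanSpace ℝ (Fin d), ‖x‖ ≤ η → f x = 0) :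
    ∃ g : (EuclideanSpace ℝ (Fin d) →L[ℝ] EuclideanSpace ℝ (Fin d)) → ℝ,
      Measurable g ∧ Integrable (fun ω => g (A ω)) P ∧
      ∀ t : ℝ, 0 < t → ∀ᵐ ω ∂P,
        t ^ α * L t *
          (P[(fun ω' => f (t⁻¹ • (A ω') (X ω'))) |
            MeasurableSpace.comap A inferInstance]) ω ≤ g (A ω) := by
  obtain ⟨Mf, hMf⟩ := hfbdd
  obtain ⟨M, hM⟩ := hsup
  have hMf0 : 0 ≤ Mf := (abs_nonneg _).trans (hMf 0)
  have hMX : ∀ t > 0, t ^ α * L t * (P.map X).real {x | t < ‖x‖} ≤ M := fun t ht => by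
    rw [map_measureReal_apply hX (measurableSet_lt measurable_const measurable_norm)]
    exact hM t ht
  have := Measure.isProbabilityMeasure_map (μ := P) hX.aemeasurable
  obtain ⟨K, hK0, hK⟩ :=
    exists_tail_scaling_bound (P.map X) hα.le hβ (hLslow 2 two_pos) hLbdd hMX
  refine ⟨fun a => Mf * K * (1 + (‖a‖ / η) ^ β), by fun_prop, ?_, fun t ht => ?_⟩
  · simp_rw [Real.div_rpow (norm_nonneg _) hη.le]
    exact ((integrable_const 1).add (hAmom.div_const _)).const_mul _
  have hF : StronglyMeasurable fun q : (EuclideanSpace ℝ (Fin d) →L[ℝ] EuclideanSpace ℝ (Fin d)) ×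
      EuclideanSpace ℝ (Fin d) => f (t⁻¹ • q.1 q.2) :=
    (hfmeas.comp
      (isBoundedBilinearMap_apply.continuous.measurable.const_smul t⁻¹)).stronglyMeasurable
  have hint : Integrable (fun ω => f (t⁻¹ • A ω (X ω))) P :=
    .of_bound (hF.comp_measurable (hA.prodMk hX)).aestronglyMeasurable Mf
      (ae_of_all _ fun _ => hMf _)
  have htL : 0 ≤ t ^ α * L t := by
    have := pos_of_forall_Icc_bounds hLbdd ht
    positivity
  filter_upwards [condExp_ae_eq_integral_map_of_indepFun hA hX hAX hF hint] with ω hω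
  calc t ^ α * L t * P[fun ω' => f (t⁻¹ • A ω' (X ω')) | MeasurableSpace.comap A inferInstance] ω
      = t ^ α * L t * ∫ x, f (t⁻¹ • A ω x) ∂P.map X := by rw [hω]
    _ ≤ t ^ α * L t * (Mf * (P.map X).real {x | t < ‖A ω‖ / η * ‖x‖}) :=
        mul_le_mul_of_nonneg_left (integral_comp_smul_apply_le _ hMf hfsupp hη ht (A ω)) htL
    _ = Mf * (t ^ α * L t * (P.map X).real {x | t < ‖A ω‖ / η * ‖x‖}) := by ring
    _ ≤ Mf * (K * (1 + (‖A ω‖ / η) ^ β)) :=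
        mul_le_mul_of_nonneg_left (hK t ht _ (by positivity)) hMf0
    _ = Mf * K * (1 + (‖A ω‖ / η) ^ β) := by ring
end
end

section
/- (Hölder-type bound on the truncated first moment.) Let $\nu$ be a probability measure on $\mathbb{R}^d$ whose tail is regularly varying with index $1$: $\sup_{t>0}t\,L_b(t)\,\nu(\{|x|>t\})<\infty$ for a slowly varying $L_b$ bounded away from zero and infinity on compacts, and let $\xi(t)=\int_{\mathbb{R}^d}\frac{tx}{1+|tx|^2}\,\nu(dx)$. Then for every $0<\delta<1$ there is $C_{\delta}<\infty$ such that $|\xi(t)|\le C_{\delta}|t|^{\delta}$ for all $|t|\le1$. -/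
/-!
Since `|t x| / (1 + |t x|²) ≤ min (|t x|, 1)`, with `2^K ≈ 1/|t|` the norm of `ξ(t)` is at most
`|t| ∫ min (|x|, 2^K) dν ≤ |t| (1 + ∑_{k<K} 2^k ν(|x| > 2^k))`. The tail assumption bounds
`2^k ν(|x| > 2^k)` by `M / L(2^k)`, and slow variation gives the Potter-type bound
`1 / L(2^k) ≤ r^k / c` with `r = 2^(1-δ) > 1`, so the geometric sum is `O(r^K) = O(|t|^(δ-1))`.
-/

open MeasureTheory Filter Topology

theorem min_le_one_add_sum_two_pow (y : ℝ) (K : ℕ) :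
    min y (2 ^ K) ≤ 1 + ∑ k ∈ Finset.range K, if (2:ℝ) ^ k < y then (2:ℝ) ^ k else 0 := by
  induction K with
  | zero => simp
  | succ K ih =>
    rw [Finset.sum_range_succ]
    split_ifs with h
    · have : (2:ℝ) ^ K ≤ 1 + ∑ k ∈ Finset.range K, if (2:ℝ) ^ k < y then (2:ℝ) ^ k else 0 :=
        (min_eq_right h.le).symm.le.trans ih
      linarith [min_le_right y ((2:ℝ) ^ (K + 1)), pow_succ (2:ℝ) K]
    · rw [min_eq_left (not_lt.mp h)] at ih
      linarith [min_le_left y ((2:ℝ) ^ (K + 1))]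

theorem norm_smul_div_one_add_sq_le {E : Type*} [NormedAddCommGroup E] [NormedSpace ℝ E]
    {t R : ℝ} (hR : 1 ≤ |t| * R) (x : E) :
    ‖(t / (1 + ‖t • x‖ ^ 2)) • x‖ ≤ |t| * min ‖x‖ R := by
  have hD : 0 < 1 + ‖t • x‖ ^ 2 := by positivity
  rw [norm_smul, norm_div, Real.norm_eq_abs, Real.norm_of_nonneg hD.le, div_mul_eq_mul_div]
  rw [norm_smul, Real.norm_eq_abs] at hD ⊢
  rcases le_total ‖x‖ R with h | h
  · rw [min_eq_left h]
    exact div_le_self (by positivity) (by nlinarith)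
  · rw [min_eq_right h, div_le_iff₀ hD]
    nlinarith [sq_nonneg (|t| * ‖x‖ - 1), abs_nonneg t]

theorem norm_integral_le_sum_two_pow_mul_tail {E : Type*} [NormedAddCommGroup E]
    [NormedSpace ℝ E] [MeasurableSpace E] [OpensMeasurableSpace E]
    (μ : Measure E) [IsFiniteMeasure μ] {t : ℝ} {K : ℕ} (hK : 1 ≤ |t| * 2 ^ K) :
    ‖∫ x, (t / (1 + ‖t • x‖ ^ 2)) • x ∂μ‖ ≤
      |t| * (μ.real Set.univ + ∑ k ∈ Finset.range K, 2 ^ k * μ.real {x | 2 ^ k < ‖x‖}) := by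
  have hmeas (k : ℕ) : MeasurableSet {x : E | 2 ^ k < ‖x‖} :=
    measurableSet_lt measurable_const measurable_norm
  have hint (k : ℕ) : Integrable ({x : E | 2 ^ k < ‖x‖}.indicator fun _ ↦ (2:ℝ) ^ k) μ :=
    (integrable_const _).indicator (hmeas k)
  calc ‖∫ x, (t / (1 + ‖t • x‖ ^ 2)) • x ∂μ‖
      ≤ ∫ x, |t| * (1 + ∑ k ∈ Finset.range K,
          {x : E | 2 ^ k < ‖x‖}.indicator (fun _ ↦ (2:ℝ) ^ k) x) ∂μ := by
        refine norm_integral_le_of_norm_le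
          (((integrable_const 1).add (integrable_finsetSum _ fun k _ ↦ hint k)).const_mul _)
          (ae_of_all _ fun x ↦ (norm_smul_div_one_add_sq_le hK x).trans ?_)
        gcongr
        simpa only [Set.indicator_apply, Set.mem_ofPred_eq] using min_le_one_add_sum_two_pow ‖x‖ K
    _ = _ := by
        rw [integral_const_mul, integral_add (integrable_const 1)
          (integrable_finsetSum _ fun k _ ↦ hint k), integral_finsetSum _ fun k _ ↦ hint k]
        simp only [integral_const, integral_indicator_const _ (hmeas _), smul_eq_mul, one_mul,
          mul_comm]

theorem exists_pos_le_pow_mul_of_eventually_le {u : ℕ → ℝ} {r : ℝ} (hr : 0 < r)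
    (hu : ∀ n, 0 < u n) (h : ∀ᶠ n in atTop, u n ≤ r * u (n + 1)) :
    ∃ c > 0, ∀ n, c ≤ r ^ n * u n := by
  obtain ⟨N, hN⟩ := eventually_atTop.mp h
  have hne : (Finset.range (N + 1)).Nonempty := Finset.nonempty_range_add_one
  refine ⟨(Finset.range (N + 1)).inf' hne fun n ↦ r ^ n * u n,
    (Finset.lt_inf'_iff hne).mpr fun n _ ↦ by have := hu n; positivity, fun n ↦ ?_⟩
  rcases le_total n N with hn | hn
  · exact Finset.inf'_le _ (Finset.mem_range_succ_iff.mpr hn)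
  · induction n, hn using Nat.le_induction with
    | base => exact Finset.inf'_le _ (Finset.self_mem_range_succ N)
    | succ n hn ih =>
      calc _ ≤ r ^ n * u n := ih
        _ ≤ r ^ n * (r * u (n + 1)) := by gcongr; exact hN n hn
        _ = r ^ (n + 1) * u (n + 1) := by ring

/-- Since `L (2t) / L t → 1 > r⁻¹`, the sequence `r^k L(2^k)` is eventually increasing. -/
theorem exists_pos_le_pow_mul_apply_two_pow {L : ℝ → ℝ} (hLpos : ∀ t, 0 < t → 0 < L t)
    (hL : Tendsto (fun t ↦ L (2 * t) / L t) atTop (𝓝 1)) {r : ℝ} (hr : 1 < r) :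
    ∃ c > 0, ∀ k : ℕ, c ≤ r ^ k * L (2 ^ k) := by
  have hratio : ∀ᶠ t in atTop, r⁻¹ < L (2 * t) / L t :=
    hL.eventually (eventually_gt_nhds (inv_lt_one_of_one_lt₀ hr))
  refine exists_pos_le_pow_mul_of_eventually_le (by linarith) (fun k ↦ hLpos _ (by positivity))
    ((tendsto_pow_atTop_atTop_of_one_lt one_lt_two).eventually
      (hratio.and (eventually_gt_atTop 0)) |>.mono fun k ⟨hk, hk0⟩ ↦ ?_)
  rw [lt_div_iff₀ (hLpos _ hk0), inv_mul_lt_iff₀ (by linarith)] at hk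
  simpa only [pow_succ'] using hk.le

theorem sum_range_le_mul_pow_div_sub_one {a : ℕ → ℝ} {C r : ℝ} (hC : 0 ≤ C) (hr : 1 < r)
    (h : ∀ k, a k ≤ C * r ^ k) (K : ℕ) :
    ∑ k ∈ Finset.range K, a k ≤ C * r ^ K / (r - 1) := by
  have hr1 : 0 < r - 1 := by linarith
  calc ∑ k ∈ Finset.range K, a k ≤ ∑ k ∈ Finset.range K, C * r ^ k :=
        Finset.sum_le_sum fun k _ ↦ h k
    _ = C * (r ^ K - 1) / (r - 1) := by rw [← Finset.mul_sum, geom_sum_eq hr.ne', mul_div_assoc]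
    _ ≤ C * r ^ K / (r - 1) := by gcongr; linarith

theorem exists_one_le_mul_two_pow_and_mul_rpow_pow_le {s a : ℝ} (hs0 : 0 < s) (hs1 : s ≤ 1)
    (ha : 0 ≤ a) : ∃ K : ℕ, 1 ≤ s * 2 ^ K ∧ s * ((2:ℝ) ^ a) ^ K ≤ 2 ^ a * s ^ (1 - a) := by
  obtain ⟨n, hn_le, hn_lt⟩ := exists_nat_pow_near (one_le_inv_iff₀.mpr ⟨hs0, hs1⟩) one_lt_two
  have hs : s * s⁻¹ = 1 := mul_inv_cancel₀ hs0.ne'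
  refine ⟨n + 1, hs ▸ by gcongr, ?_⟩
  calc s * ((2:ℝ) ^ a) ^ (n + 1) = s * ((2:ℝ) ^ (n + 1)) ^ a := by
        rw [Real.rpow_pow_comm zero_le_two]
    _ ≤ s * (2 * s⁻¹) ^ a := by
        gcongr
        rw [pow_succ']
        gcongr
    _ = 2 ^ a * s ^ (1 - a) := by
        rw [Real.mul_rpow zero_le_two (by positivity), Real.inv_rpow hs0.le,
          Real.rpow_sub hs0, Real.rpow_one]
        ring

theorem truncated_first_moment_bound_general
    {d : ℕ} (ν : Measure (EuclideanSpace ℝ (Fin d))) [IsProbabilityMeasure ν]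
    (L : ℝ → ℝ)
    (hLpos : ∀ t : ℝ, 0 < t → 0 < L t)
    (hLslow : ∀ l : ℝ, 0 < l →
      Tendsto (fun t => L (l * t) / L t) atTop (𝓝 1))
    (htail : ∃ M : ℝ, ∀ t : ℝ, 0 < t →
      t * L t * (ν {x | t < ‖x‖}).toReal ≤ M) :
    ∀ δ : ℝ, 0 < δ → δ < 1 →
      ∃ C : ℝ, ∀ t : ℝ, |t| ≤ 1 →
        ‖∫ x, (t / (1 + ‖t • x‖ ^ 2)) • x ∂ν‖ ≤ C * |t| ^ δ := by
  intro δ hδ0 hδ1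
  obtain ⟨M, hM⟩ := htail
  set r : ℝ := 2 ^ (1 - δ)
  have hr : 1 < r := Real.one_lt_rpow one_lt_two (by linarith)
  have hr1 : 0 < r - 1 := by linarith
  obtain ⟨c, hc, hcL⟩ := exists_pos_le_pow_mul_apply_two_pow hLpos (hLslow 2 two_pos) hr
  have htail_two_pow (k : ℕ) : 2 ^ k * ν.real {x | 2 ^ k < ‖x‖} ≤ M / c * r ^ k := by
    rw [div_mul_eq_mul_div, le_div_iff₀ hc]
    calc 2 ^ k * ν.real {x | 2 ^ k < ‖x‖} * c
        ≤ 2 ^ k * ν.real {x | 2 ^ k < ‖x‖} * (r ^ k * L (2 ^ k)) := by gcongr; exact hcL k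
      _ = r ^ k * (2 ^ k * L (2 ^ k) * (ν {x | 2 ^ k < ‖x‖}).toReal) := by
        rw [Measure.real]; ring
      _ ≤ M * r ^ k := by rw [mul_comm M]; gcongr; exact hM _ (by positivity)
  have hMc : 0 ≤ M / c := by
    simpa using (mul_nonneg zero_le_one measureReal_nonneg).trans (htail_two_pow 0)
  refine ⟨1 + M / c * r / (r - 1), fun t ht ↦ ?_⟩
  rcases eq_or_ne t 0 with rfl | ht0
  · simp [Real.zero_rpow hδ0.ne']
  obtain ⟨K, hK, hrK⟩ := exists_one_le_mul_two_pow_and_mul_rpow_pow_le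
    (abs_pos.mpr ht0) ht (a := 1 - δ) (by linarith)
  rw [sub_sub_cancel] at hrK
  calc ‖∫ x, (t / (1 + ‖t • x‖ ^ 2)) • x ∂ν‖
      ≤ |t| * (1 + ∑ k ∈ Finset.range K, 2 ^ k * ν.real {x | 2 ^ k < ‖x‖}) := by
        simpa only [probReal_univ] using norm_integral_le_sum_two_pow_mul_tail ν hK
    _ ≤ |t| * (1 + M / c * r ^ K / (r - 1)) := by
        gcongr; exact sum_range_le_mul_pow_div_sub_one hMc hr htail_two_pow K
    _ = |t| + M / c / (r - 1) * (|t| * r ^ K) := by ring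
    _ ≤ |t| ^ δ + M / c / (r - 1) * (r * |t| ^ δ) := by
        gcongr
        exact Real.self_le_rpow_of_le_one (abs_nonneg t) ht hδ1.le
    _ = (1 + M / c * r / (r - 1)) * |t| ^ δ := by ring

/-- Hölder-type bound on the truncated first moment: if the
tail of `ν` is regularly varying of index `1`, i.e.
`sup_{t>0} t L_b(t) ν({|x|>t}) < ∞`, and
`ξ(t) = ∫ t x / (1+|t x|²) ν(dx)`, then for every `0 < δ < 1` there is
`C_δ < ∞` with `|ξ(t)| ≤ C_δ |t|^δ` for all `|t| ≤ 1`. -/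
theorem truncated_first_moment_bound
    {d : ℕ} (ν : Measure (EuclideanSpace ℝ (Fin d))) [IsProbabilityMeasure ν]
    (L : ℝ → ℝ)
    (hLpos : ∀ t : ℝ, 0 < t → 0 < L t)
    (hLslow : ∀ l : ℝ, 0 < l →
      Tendsto (fun t => L (l * t) / L t) atTop (𝓝 1))
    (hLbdd : ∀ a b : ℝ, 0 < a →
      ∃ m M : ℝ, 0 < m ∧ ∀ t ∈ Set.Icc a b, m ≤ L t ∧ L t ≤ M)
    (htail : ∃ M : ℝ, ∀ t : ℝ, 0 < t →
      t * L t * (ν {x | t < ‖x‖}).toReal ≤ M) :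
    ∀ δ : ℝ, 0 < δ → δ < 1 →
      ∃ C : ℝ, ∀ t : ℝ, |t| ≤ 1 →
        ‖∫ x, (t / (1 + ‖t • x‖ ^ 2)) • x ∂ν‖ ≤ C * |t| ^ δ :=
  truncated_first_moment_bound_general ν L hLpos hLslow htail
end
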